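/- The set of real points Υ(ℝ) of the surface parametrizing cuboids is path-connected. -/
import Mathlib


open scoped LinearAlgebra.Projectivization

noncomputable section

/-- Real projective space `ℙ⁶(ℝ)` with the Euclidean (quotient) topology. -/
instance : TopologicalSpace (ℙ ℝ (Fin 7 → ℝ)) :=
  inferInstanceAs (TopologicalSpace (Quotient (projectivizationSetoid ℝ (Fin 7 → ℝ))))

/-- The set of real points of the surface parametrizing cuboids, inside `ℙ⁶(ℝ)`.
Homogeneous coordinates: `A,B,C,X,Y,Z,U` are `v 0, …, v 6`. -/
def UpsilonR : Set (ℙ ℝ (Fin 7 → ℝ)) :=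
  {p | ∃ (v : Fin 7 → ℝ) (hv : v ≠ 0), Projectivization.mk ℝ v hv = p ∧
    v 0 ^ 2 + v 1 ^ 2 - v 5 ^ 2 = 0 ∧ v 1 ^ 2 + v 2 ^ 2 - v 3 ^ 2 = 0 ∧
    v 2 ^ 2 + v 0 ^ 2 - v 4 ^ 2 = 0 ∧ v 0 ^ 2 + v 3 ^ 2 - v 6 ^ 2 = 0}

namespace CuboidAux

/-- The lift of the sheet parametrization to vectors. -/
def Fv (e₁ e₂ e₃ : ℝ) (w : Fin 3 → ℝ) : Fin 7 → ℝ :=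
  ![w 0, w 1, w 2, e₁ * Real.sqrt (w 1 ^ 2 + w 2 ^ 2),
    e₂ * Real.sqrt (w 2 ^ 2 + w 0 ^ 2), e₃ * Real.sqrt (w 0 ^ 2 + w 1 ^ 2),
    Real.sqrt (w 0 ^ 2 + w 1 ^ 2 + w 2 ^ 2)]

lemma mk_congr (v v' : Fin 7 → ℝ) (h : v ≠ 0) (h' : v' ≠ 0) (hvv : v = v') :
    Projectivization.mk ℝ v h = Projectivization.mk ℝ v' h' := by subst hvv; rfl

lemma sum_sq_pos {w : Fin 3 → ℝ} (hw : w ≠ 0) : 0 < w 0 ^ 2 + w 1 ^ 2 + w 2 ^ 2 := by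
  by_contra h
  push_neg at h
  have h0 : w 0 = 0 := pow_eq_zero_iff two_ne_zero |>.mp
    (by nlinarith [sq_nonneg (w 0), sq_nonneg (w 1), sq_nonneg (w 2)])
  have h1 : w 1 = 0 := pow_eq_zero_iff two_ne_zero |>.mp
    (by nlinarith [sq_nonneg (w 0), sq_nonneg (w 1), sq_nonneg (w 2)])
  have h2 : w 2 = 0 := pow_eq_zero_iff two_ne_zero |>.mp
    (by nlinarith [sq_nonneg (w 0), sq_nonneg (w 1), sq_nonneg (w 2)])
  apply hw
  funext i
  fin_cases i
  · exact h0
  · exact h1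
  · exact h2

lemma Fv_ne_zero (e₁ e₂ e₃ : ℝ) {w : Fin 3 → ℝ} (hw : w ≠ 0) : Fv e₁ e₂ e₃ w ≠ 0 := by
  intro h
  have h6 : Real.sqrt (w 0 ^ 2 + w 1 ^ 2 + w 2 ^ 2) = 0 := congrFun h 6
  have hpos := sum_sq_pos hw
  rw [Real.sqrt_eq_zero (le_of_lt hpos)] at h6
  linarith

/-- The sheet parametrization into projective space. -/
def Phi (e₁ e₂ e₃ : ℝ) (w : {w : Fin 3 → ℝ // w ≠ 0}) : ℙ ℝ (Fin 7 → ℝ) :=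
  Projectivization.mk ℝ (Fv e₁ e₂ e₃ w.1) (Fv_ne_zero e₁ e₂ e₃ w.2)

lemma Phi_mem {e₁ e₂ e₃ : ℝ} (h₁ : e₁ ^ 2 = 1) (h₂ : e₂ ^ 2 = 1) (h₃ : e₃ ^ 2 = 1)
    (w : {w : Fin 3 → ℝ // w ≠ 0}) : Phi e₁ e₂ e₃ w ∈ UpsilonR := by
  refine ⟨Fv e₁ e₂ e₃ w.1, Fv_ne_zero e₁ e₂ e₃ w.2, rfl, ?_, ?_, ?_, ?_⟩
  · show w.1 0 ^ 2 + w.1 1 ^ 2 - (e₃ * Real.sqrt (w.1 0 ^ 2 + w.1 1 ^ 2)) ^ 2 = 0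
    rw [mul_pow, h₃, Real.sq_sqrt (by positivity)]; ring
  · show w.1 1 ^ 2 + w.1 2 ^ 2 - (e₁ * Real.sqrt (w.1 1 ^ 2 + w.1 2 ^ 2)) ^ 2 = 0
    rw [mul_pow, h₁, Real.sq_sqrt (by positivity)]; ring
  · show w.1 2 ^ 2 + w.1 0 ^ 2 - (e₂ * Real.sqrt (w.1 2 ^ 2 + w.1 0 ^ 2)) ^ 2 = 0
    rw [mul_pow, h₂, Real.sq_sqrt (by positivity)]; ring
  · show w.1 0 ^ 2 + (e₁ * Real.sqrt (w.1 1 ^ 2 + w.1 2 ^ 2)) ^ 2 -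
        (Real.sqrt (w.1 0 ^ 2 + w.1 1 ^ 2 + w.1 2 ^ 2)) ^ 2 = 0
    rw [mul_pow, h₁, Real.sq_sqrt (by positivity), Real.sq_sqrt (by positivity)]; ring

lemma continuous_Phi (e₁ e₂ e₃ : ℝ) : Continuous (Phi e₁ e₂ e₃) := by
  have hF : Continuous fun w : {w : Fin 3 → ℝ // w ≠ 0} =>
      (⟨Fv e₁ e₂ e₃ w.1, Fv_ne_zero e₁ e₂ e₃ w.2⟩ : {v : Fin 7 → ℝ // v ≠ 0}) := by
    refine Continuous.subtype_mk ?_ _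
    have h0 : Continuous fun w : {w : Fin 3 → ℝ // w ≠ 0} => w.1 0 :=
      (continuous_apply 0).comp continuous_subtype_val
    have h1 : Continuous fun w : {w : Fin 3 → ℝ // w ≠ 0} => w.1 1 :=
      (continuous_apply 1).comp continuous_subtype_val
    have h2 : Continuous fun w : {w : Fin 3 → ℝ // w ≠ 0} => w.1 2 :=
      (continuous_apply 2).comp continuous_subtype_val
    refine continuous_pi fun i => ?_
    fin_cases i
    · exact h0
    · exact h1
    · exact h2
    · exact continuous_const.mul (Real.continuous_sqrt.comp ((h1.pow 2).add (h2.pow 2)))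
    · exact continuous_const.mul (Real.continuous_sqrt.comp ((h2.pow 2).add (h0.pow 2)))
    · exact continuous_const.mul (Real.continuous_sqrt.comp ((h0.pow 2).add (h1.pow 2)))
    · exact Real.continuous_sqrt.comp (((h0.pow 2).add (h1.pow 2)).add (h2.pow 2))
  exact continuous_quotient_mk'.comp hF

lemma joined_Phi {e₁ e₂ e₃ : ℝ} (h₁ : e₁ ^ 2 = 1) (h₂ : e₂ ^ 2 = 1) (h₃ : e₃ ^ 2 = 1)
    (w w' : {w : Fin 3 → ℝ // w ≠ 0}) :
    JoinedIn UpsilonR (Phi e₁ e₂ e₃ w) (Phi e₁ e₂ e₃ w') := by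
  have hD : IsPathConnected ({(0 : Fin 3 → ℝ)}ᶜ) := by
    apply isPathConnected_compl_singleton_of_one_lt_rank
    rw [rank_fun']
    norm_num
  have hJ : JoinedIn ({(0 : Fin 3 → ℝ)}ᶜ) w.1 w'.1 :=
    hD.joinedIn w.1 w.2 w'.1 w'.2
  have hJ' : Joined (⟨w.1, w.2⟩ : {w : Fin 3 → ℝ // w ≠ 0})
      (⟨w'.1, w'.2⟩ : {w : Fin 3 → ℝ // w ≠ 0}) := hJ.joined_subtype
  obtain ⟨γ⟩ := hJ'
  refine ⟨(γ.map (continuous_Phi e₁ e₂ e₃)).cast (by simp) (by simp), fun t => ?_⟩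
  simp only [Path.cast_coe, Path.map_coe, Function.comp_apply]
  exact Phi_mem h₁ h₂ h₃ _

def b₁ : {w : Fin 3 → ℝ // w ≠ 0} :=
  ⟨![1, 0, 0], by intro h; simpa using congrFun h 0⟩

def b₂ : {w : Fin 3 → ℝ // w ≠ 0} :=
  ⟨![0, 1, 0], by intro h; simpa using congrFun h 1⟩

def b₃ : {w : Fin 3 → ℝ // w ≠ 0} :=
  ⟨![0, 0, 1], by intro h; simpa using congrFun h 2⟩

lemma Fv_eq_aux {e₁ e₁' e₂ e₂' e₃ e₃' : ℝ} {w : Fin 3 → ℝ}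
    (hx : e₁ * Real.sqrt (w 1 ^ 2 + w 2 ^ 2) = e₁' * Real.sqrt (w 1 ^ 2 + w 2 ^ 2))
    (hy : e₂ * Real.sqrt (w 2 ^ 2 + w 0 ^ 2) = e₂' * Real.sqrt (w 2 ^ 2 + w 0 ^ 2))
    (hz : e₃ * Real.sqrt (w 0 ^ 2 + w 1 ^ 2) = e₃' * Real.sqrt (w 0 ^ 2 + w 1 ^ 2)) :
    Fv e₁ e₂ e₃ w = Fv e₁' e₂' e₃' w := by
  funext i
  fin_cases i
  · rfl
  · rfl
  · rfl
  · exact hx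
  · exact hy
  · exact hz
  · rfl

lemma flip₁ (e₁ e₁' e₂ e₃ : ℝ) : Phi e₁ e₂ e₃ b₁ = Phi e₁' e₂ e₃ b₁ := by
  refine mk_congr _ _ _ _ (Fv_eq_aux ?_ rfl rfl)
  show e₁ * Real.sqrt ((0 : ℝ) ^ 2 + (0 : ℝ) ^ 2) = e₁' * Real.sqrt ((0 : ℝ) ^ 2 + (0 : ℝ) ^ 2)
  norm_num

lemma flip₂ (e₁ e₂ e₂' e₃ : ℝ) : Phi e₁ e₂ e₃ b₂ = Phi e₁ e₂' e₃ b₂ := by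
  refine mk_congr _ _ _ _ (Fv_eq_aux rfl ?_ rfl)
  show e₂ * Real.sqrt ((0 : ℝ) ^ 2 + (0 : ℝ) ^ 2) = e₂' * Real.sqrt ((0 : ℝ) ^ 2 + (0 : ℝ) ^ 2)
  norm_num

lemma flip₃ (e₁ e₂ e₃ e₃' : ℝ) : Phi e₁ e₂ e₃ b₃ = Phi e₁ e₂ e₃' b₃ := by
  refine mk_congr _ _ _ _ (Fv_eq_aux rfl rfl ?_)
  show e₃ * Real.sqrt ((0 : ℝ) ^ 2 + (0 : ℝ) ^ 2) = e₃' * Real.sqrt ((0 : ℝ) ^ 2 + (0 : ℝ) ^ 2)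
  norm_num

/-- Every point of `UpsilonR` with positive last coordinate representative lies on a sheet. -/
lemma exists_phi_of_pos (v : Fin 7 → ℝ) (hv : v ≠ 0)
    (E1 : v 0 ^ 2 + v 1 ^ 2 - v 5 ^ 2 = 0) (E2 : v 1 ^ 2 + v 2 ^ 2 - v 3 ^ 2 = 0)
    (E3 : v 2 ^ 2 + v 0 ^ 2 - v 4 ^ 2 = 0) (E4 : v 0 ^ 2 + v 3 ^ 2 - v 6 ^ 2 = 0)
    (h6 : 0 < v 6) :
    ∃ e₁ e₂ e₃, e₁ ^ 2 = 1 ∧ e₂ ^ 2 = 1 ∧ e₃ ^ 2 = 1 ∧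
      ∃ w : {w : Fin 3 → ℝ // w ≠ 0}, Phi e₁ e₂ e₃ w = Projectivization.mk ℝ v hv := by
  have key : ∀ a : ℝ, ∀ s : ℝ, s = a ^ 2 →
      (if 0 ≤ a then (1 : ℝ) else -1) * Real.sqrt s = a := by
    intro a s hs
    subst hs
    rw [Real.sqrt_sq_eq_abs]
    rcases le_or_gt 0 a with h | h
    · rw [if_pos h, abs_of_nonneg h, one_mul]
    · rw [if_neg (not_le.2 h), abs_of_neg h]; ring
  have hw : (![v 0, v 1, v 2] : Fin 3 → ℝ) ≠ 0 := by
    intro h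
    have h0 : v 0 = 0 := congrFun h 0
    have h1 : v 1 = 0 := congrFun h 1
    have h2 : v 2 = 0 := congrFun h 2
    have h6' : v 6 ^ 2 = 0 := by nlinarith
    have : v 6 = 0 := pow_eq_zero_iff two_ne_zero |>.mp h6'
    linarith
  refine ⟨if 0 ≤ v 3 then 1 else -1, if 0 ≤ v 4 then 1 else -1, if 0 ≤ v 5 then 1 else -1,
    ?_, ?_, ?_, ⟨![v 0, v 1, v 2], hw⟩, ?_⟩
  · split <;> norm_num
  · split <;> norm_num
  · split <;> norm_num
  refine mk_congr _ _ _ _ ?_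
  funext i
  fin_cases i
  · rfl
  · rfl
  · rfl
  · show (if 0 ≤ v 3 then (1 : ℝ) else -1) * Real.sqrt (v 1 ^ 2 + v 2 ^ 2) = v 3
    exact key (v 3) _ (by nlinarith)
  · show (if 0 ≤ v 4 then (1 : ℝ) else -1) * Real.sqrt (v 2 ^ 2 + v 0 ^ 2) = v 4
    exact key (v 4) _ (by nlinarith)
  · show (if 0 ≤ v 5 then (1 : ℝ) else -1) * Real.sqrt (v 0 ^ 2 + v 1 ^ 2) = v 5
    exact key (v 5) _ (by nlinarith)
  · show Real.sqrt (v 0 ^ 2 + v 1 ^ 2 + v 2 ^ 2) = v 6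
    rw [show v 0 ^ 2 + v 1 ^ 2 + v 2 ^ 2 = v 6 ^ 2 by nlinarith]
    rw [Real.sqrt_sq_eq_abs, abs_of_pos h6]

lemma exists_phi {p : ℙ ℝ (Fin 7 → ℝ)} (hp : p ∈ UpsilonR) :
    ∃ e₁ e₂ e₃, e₁ ^ 2 = 1 ∧ e₂ ^ 2 = 1 ∧ e₃ ^ 2 = 1 ∧
      ∃ w : {w : Fin 3 → ℝ // w ≠ 0}, Phi e₁ e₂ e₃ w = p := by
  obtain ⟨v, hv, hmk, E1, E2, E3, E4⟩ := hp
  have h6ne : v 6 ≠ 0 := by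
    intro h
    apply hv
    have h0 : v 0 = 0 := pow_eq_zero_iff two_ne_zero |>.mp
      (by nlinarith [sq_nonneg (v 0), sq_nonneg (v 3)])
    have h3 : v 3 = 0 := pow_eq_zero_iff two_ne_zero |>.mp
      (by nlinarith [sq_nonneg (v 0), sq_nonneg (v 3)])
    have h1 : v 1 = 0 := pow_eq_zero_iff two_ne_zero |>.mp
      (by nlinarith [sq_nonneg (v 1), sq_nonneg (v 2)])
    have h2 : v 2 = 0 := pow_eq_zero_iff two_ne_zero |>.mp
      (by nlinarith [sq_nonneg (v 1), sq_nonneg (v 2)])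
    have h4 : v 4 = 0 := pow_eq_zero_iff two_ne_zero |>.mp (by nlinarith)
    have h5 : v 5 = 0 := pow_eq_zero_iff two_ne_zero |>.mp (by nlinarith)
    funext i
    fin_cases i
    · exact h0
    · exact h1
    · exact h2
    · exact h3
    · exact h4
    · exact h5
    · exact h
  rcases h6ne.lt_or_gt with h6 | h6
  · have hv' : -v ≠ 0 := by simpa using hv
    have hmk' : Projectivization.mk ℝ (-v) hv' = p := by
      rw [← hmk, Projectivization.mk_eq_mk_iff']
      exact ⟨-1, by funext i; simp⟩
    have hE : ∀ i : Fin 7, (-v) i ^ 2 = v i ^ 2 := by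
      intro i; simp [neg_pow]
    obtain ⟨e₁, e₂, e₃, h₁, h₂, h₃, w, hweq⟩ :=
      exists_phi_of_pos (-v) hv'
        (by rw [hE 0, hE 1, hE 5]; exact E1) (by rw [hE 1, hE 2, hE 3]; exact E2)
        (by rw [hE 2, hE 0, hE 4]; exact E3) (by rw [hE 0, hE 3, hE 6]; exact E4)
        (by simpa using h6)
    exact ⟨e₁, e₂, e₃, h₁, h₂, h₃, w, hweq.trans hmk'⟩
  · obtain ⟨e₁, e₂, e₃, h₁, h₂, h₃, w, hweq⟩ :=
      exists_phi_of_pos v hv E1 E2 E3 E4 h6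
    exact ⟨e₁, e₂, e₃, h₁, h₂, h₃, w, hweq.trans hmk⟩

lemma joined_to_base {p : ℙ ℝ (Fin 7 → ℝ)} (hp : p ∈ UpsilonR) :
    JoinedIn UpsilonR p (Phi 1 1 1 b₃) := by
  obtain ⟨e₁, e₂, e₃, h₁, h₂, h₃, w, hw⟩ := exists_phi hp
  have one_sq : (1 : ℝ) ^ 2 = 1 := one_pow 2
  have step1 : JoinedIn UpsilonR p (Phi e₁ e₂ e₃ b₁) := by
    rw [← hw]; exact joined_Phi h₁ h₂ h₃ w b₁
  have step2 : JoinedIn UpsilonR (Phi e₁ e₂ e₃ b₁) (Phi 1 e₂ e₃ b₂) := by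
    rw [flip₁ e₁ 1 e₂ e₃]
    exact joined_Phi one_sq h₂ h₃ b₁ b₂
  have step3 : JoinedIn UpsilonR (Phi 1 e₂ e₃ b₂) (Phi 1 1 e₃ b₃) := by
    rw [flip₂ 1 e₂ 1 e₃]
    exact joined_Phi one_sq one_sq h₃ b₂ b₃
  have step4 : JoinedIn UpsilonR (Phi 1 1 e₃ b₃) (Phi 1 1 1 b₃) := by
    rw [flip₃ 1 1 e₃ 1]
    exact JoinedIn.refl (Phi_mem one_sq one_sq one_sq b₃)
  exact ((step1.trans step2).trans step3).trans step4

end CuboidAux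

/-- `Υ(ℝ)` is path-connected. -/
theorem upsilonR_pathConnected : PathConnectedSpace ↥UpsilonR := by
  rw [← isPathConnected_iff_pathConnectedSpace]
  have one_sq : (1 : ℝ) ^ 2 = 1 := one_pow 2
  refine ⟨CuboidAux.Phi 1 1 1 CuboidAux.b₃,
    CuboidAux.Phi_mem one_sq one_sq one_sq CuboidAux.b₃, ?_⟩
  intro q hq
  exact (CuboidAux.joined_to_base hq).symm
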